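/- arXiv:2409.19576 — 2 statements merged into one kernel-verified Lean document; each statement's English description precedes it below -/
import Mathlib

section
/- If u is a closed string with |u| ≥ 2, then its longest border occurs exactly twice in u. -/
/-!
Let `b` be a nonempty border of `u` occurring exactly twice, necessarily as the prefix and as the
suffix. The longest border `B` is at least as long as `b`, so `b` is a prefix of `B` and every
occurrence of `B` starts at an occurrence of `b`. An occurrence of `B` at the suffix position of `b`
forces `|B| ≤ |b|`, so the only occurrences of `B` are its own prefix and suffix ones.
-/

variable {α : Type*} [DecidableEq α]

/-- Number of occurrences of `s` as a factor of `w` (starting positions, 0-indexed). -/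
def countOcc (s w : List α) : ℕ :=
  ((Finset.range (w.length + 1)).filter (fun i => s <+: w.drop i)).card

/-- `b` is a border of `w`. -/
def IsBorder (b w : List α) : Prop := b ≠ w ∧ b <+: w ∧ b <:+ w

/-- The longest border of `w`. -/
def bord (w : List α) : List α :=
  w.take (((Finset.range w.length).filter (fun k => w.take k <:+ w)).sup id)

/-- A string is closed if its length is one, or it has a nonempty border occurring
exactly twice in it. -/
def IsClosedStr (w : List α) : Prop :=
  w.length = 1 ∨ ∃ b : List α, b ≠ [] ∧ IsBorder b w ∧ countOcc b w = 2

/-- The longest repeating suffix of `w` (the empty string if none). -/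
def lrs (w : List α) : List α :=
  w.drop (w.length -
    ((Finset.range (w.length + 1)).filter
      (fun k => 2 ≤ countOcc (w.drop (w.length - k)) w)).sup id)

/-- `u` is a factor (contiguous substring) of `w`. -/
def IsFactor (u w : List α) : Prop := ∃ s t : List α, w = s ++ u ++ t

/-- The set of all factors of `w`. -/
def factors (w : List α) : Finset (List α) :=
  (Finset.range (w.length + 1) ×ˢ Finset.range (w.length + 1)).image
    (fun p => (w.drop p.1).take p.2)

/-- The set of distinct closed factors of `w`. -/
noncomputable def closedFactors (w : List α) : Finset (List α) :=
  @Finset.filter _ IsClosedStr (Classical.decPred _) (factors w)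

def occurrences (s w : List α) : Finset ℕ :=
  (Finset.range (w.length + 1)).filter (fun i => s <+: w.drop i)

theorem countOcc_eq_card_occurrences (s w : List α) :
    countOcc s w = (occurrences s w).card := rfl

theorem mem_occurrences {s w : List α} {i : ℕ} :
    i ∈ occurrences s w ↔ i ≤ w.length ∧ s <+: w.drop i := by
  simp [occurrences]

theorem IsBorder.length_lt {β : Type*} {b w : List β} (h : IsBorder b w) : b.length < w.length :=
  lt_of_le_of_ne h.2.1.length_le fun hlen => h.1 (h.2.1.eq_of_length hlen)

theorem IsBorder.pair_subset_occurrences {b w : List α} (h : IsBorder b w) :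
    {0, w.length - b.length} ⊆ occurrences b w := by
  intro i hi
  rw [mem_occurrences]
  rcases Finset.mem_insert.mp hi with rfl | hi
  · exact ⟨Nat.zero_le _, h.2.1⟩
  · obtain ⟨t, rfl⟩ := h.2.2
    rw [Finset.mem_singleton.mp hi]
    simp

theorem IsBorder.card_pair {β : Type*} {b w : List β} (h : IsBorder b w) :
    ({0, w.length - b.length} : Finset ℕ).card = 2 := by
  have := h.length_lt
  rw [Finset.card_pair]
  omega

theorem IsBorder.occurrences_eq_pair {b w : List α} (h : IsBorder b w)
    (h2 : countOcc b w = 2) : occurrences b w = {0, w.length - b.length} :=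
  (Finset.eq_of_subset_of_card_le h.pair_subset_occurrences
    (by rw [← countOcc_eq_card_occurrences, h2, h.card_pair])).symm

theorem IsBorder.countOcc_eq_two_of_prefix {b B w : List α} (hb : IsBorder b w)
    (hb2 : countOcc b w = 2) (hB : IsBorder B w) (hbB : b <+: B) : countOcc B w = 2 := by
  rw [countOcc_eq_card_occurrences, ← hB.card_pair]
  congr 1
  refine subset_antisymm (fun i hi => ?_) hB.pair_subset_occurrences
  have hiB := mem_occurrences.mp hi
  have hib : i ∈ occurrences b w := mem_occurrences.mpr ⟨hiB.1, hbB.trans hiB.2⟩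
  rw [hb.occurrences_eq_pair hb2, Finset.mem_insert, Finset.mem_singleton] at hib
  rcases hib with rfl | rfl
  · exact Finset.mem_insert_self _ _
  · obtain ⟨t, rfl⟩ := hb.2.2
    have hBb : B.length ≤ b.length := by simpa using hiB.2.length_le
    have : B.length = b.length := le_antisymm hBb hbB.length_le
    simp [this]

def borderLengths (w : List α) : Finset ℕ :=
  (Finset.range w.length).filter (fun k => w.take k <:+ w)

theorem bord_eq_take (w : List α) : bord w = w.take ((borderLengths w).sup id) := rfl

theorem IsBorder.length_mem_borderLengths {b w : List α} (h : IsBorder b w) :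
    b.length ∈ borderLengths w := by
  rw [borderLengths, Finset.mem_filter, Finset.mem_range, ← List.prefix_iff_eq_take.mp h.2.1]
  exact ⟨h.length_lt, h.2.2⟩

theorem IsBorder.length_le_length_bord {b w : List α} (h : IsBorder b w) :
    b.length ≤ (bord w).length := by
  have hle := Finset.le_sup (f := id) h.length_mem_borderLengths
  have hlt := h.length_lt
  rw [bord_eq_take, List.length_take]
  exact le_min hle hlt.le

theorem bord_isBorder {w : List α} (hw : w ≠ []) : IsBorder (bord w) w := by
  have hne : (borderLengths w).Nonempty :=
    ⟨0, by simpa [borderLengths] using List.length_pos_iff.mpr hw⟩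
  obtain ⟨k, hk, hksup⟩ := Finset.exists_mem_eq_sup _ hne id
  simp only [borderLengths, Finset.mem_filter, Finset.mem_range] at hk
  rw [bord_eq_take, hksup, id]
  refine ⟨fun h => ?_, List.take_prefix _ _, hk.2⟩
  have := congrArg List.length h
  rw [List.length_take] at this
  omega

theorem IsBorder.prefix_bord {b w : List α} (h : IsBorder b w) : b <+: bord w :=
  List.prefix_of_prefix_length_le h.2.1 (bord_isBorder (by rintro rfl; simpa using h.length_lt)).2.1
    h.length_le_length_bord

theorem stmt1 (u : List α) (hc : IsClosedStr u) (hlen : 2 ≤ u.length) :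
    countOcc (bord u) u = 2 := by
  obtain hone | ⟨b, -, hb, hb2⟩ := hc
  · omega
  have hu : u ≠ [] := List.ne_nil_of_length_pos (by omega)
  exact hb.countOcc_eq_two_of_prefix hb2 (bord_isBorder hu) hb.prefix_bord
end

section
/- Let T be a string and 1 ≤ j ≤ |T|. For every suffix b of T[1..j] with |lrs²(T[1..j])| < |b| ≤ |lrs(T[1..j])|, there exists exactly one closed suffix u of T[1..j] whose longest border equals b; moreover this u occurs exactly once in T[1..j]. -/
variable {α : Type*} [DecidableEq α]

/-! ### Auxiliary lemmas -/

def occs (s w : List α) : Finset ℕ :=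
  (Finset.range (w.length + 1)).filter (fun i => s <+: w.drop i)

lemma countOcc_eq_card (s w : List α) : countOcc s w = (occs s w).card := rfl

lemma mem_occs {s w : List α} (hs : s ≠ []) {i : ℕ} :
    i ∈ occs s w ↔ s <+: w.drop i := by
  constructor
  · exact fun h => (Finset.mem_filter.mp h).2
  · intro h
    have h1 := h.length_le
    have h2 : 0 < s.length := List.length_pos_iff.mpr hs
    rw [List.length_drop] at h1
    exact Finset.mem_filter.mpr ⟨Finset.mem_range.mpr (by omega), h⟩

lemma occ_bound {s w : List α} (hs : s ≠ []) {i : ℕ} (h : i ∈ occs s w) :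
    i + s.length ≤ w.length := by
  have h1 := ((mem_occs hs).mp h).length_le
  have h2 : 0 < s.length := List.length_pos_iff.mpr hs
  rw [List.length_drop] at h1
  omega

lemma suffix_mem_occs {s w : List α} (hs : s ≠ []) (h : s <:+ w) :
    w.length - s.length ∈ occs s w := by
  have hd : w.drop (w.length - s.length) = s := (List.suffix_iff_eq_drop.mp h).symm
  exact (mem_occs hs).mpr (by rw [hd])

lemma suffix_eq_of_length {a c w : List α} (ha : a <:+ w) (hc : c <:+ w)
    (h : a.length = c.length) : a = c := by
  rw [List.suffix_iff_eq_drop.mp ha, List.suffix_iff_eq_drop.mp hc, h]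

lemma countOcc_le_of_prefix {b c : List α} (h : b <+: c) (w : List α) :
    countOcc c w ≤ countOcc b w := by
  refine Finset.card_le_card (fun i hi => Finset.mem_filter.mpr ?_)
  obtain ⟨h1, h2⟩ := Finset.mem_filter.mp hi
  exact ⟨h1, h.trans h2⟩

lemma countOcc_le_of_suffix {b c : List α} (hb : b ≠ []) (h : b <:+ c) (w : List α) :
    countOcc c w ≤ countOcc b w := by
  have hc : c ≠ [] := fun hc => hb (List.eq_nil_of_suffix_nil (hc ▸ h))
  obtain ⟨m, hm⟩ := h
  refine Finset.card_le_card_of_injOn (fun i => i + m.length) (fun i hi => ?_) ?_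
  · have hocc := (mem_occs hc).mp hi
    obtain ⟨r, hr⟩ := hocc
    refine (mem_occs hb).mpr ?_
    have key : w.drop (i + m.length) = b ++ r := by
      rw [← List.drop_drop, ← hr, ← hm, List.append_assoc, List.drop_left]
    exact ⟨r, key.symm⟩
  · intro x _ y _ h; simp only at h; omega

lemma countOcc_suffix_text_le {u w b : List α} (hb : b ≠ []) (h : u <:+ w) :
    countOcc b u ≤ countOcc b w := by
  obtain ⟨m, hm⟩ := h
  refine Finset.card_le_card_of_injOn (fun t => t + m.length) (fun t ht => ?_) ?_
  · have hocc := (mem_occs hb).mp ht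
    refine (mem_occs hb).mpr ?_
    have key : w.drop (t + m.length) = u.drop t := by
      rw [Nat.add_comm, ← List.drop_drop, ← hm, List.drop_left]
    rw [key]; exact hocc
  · intro x _ y _ h; simp only at h; omega

/-! ### lrs lemmas -/

def Kset (w : List α) : Finset ℕ :=
  (Finset.range (w.length + 1)).filter (fun k => 2 ≤ countOcc (w.drop (w.length - k)) w)

lemma lrs_eq (w : List α) : lrs w = w.drop (w.length - (Kset w).sup id) := rfl

lemma countOcc_nil (w : List α) : countOcc ([] : List α) w = w.length + 1 := by
  unfold countOcc
  rw [Finset.filter_true_of_mem (fun i _ => List.nil_prefix), Finset.card_range]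

lemma zero_mem_Kset {w : List α} (hw : w ≠ []) : 0 ∈ Kset w := by
  have hl : 0 < w.length := List.length_pos_iff.mpr hw
  refine Finset.mem_filter.mpr ⟨Finset.mem_range.mpr (by omega), ?_⟩
  simp only [Nat.sub_zero, List.drop_length, countOcc_nil]
  omega

lemma Ksup_le (w : List α) : (Kset w).sup id ≤ w.length :=
  Finset.sup_le fun k hk => by
    have := Finset.mem_range.mp (Finset.mem_filter.mp hk).1; simpa using by omega

lemma lrs_length (w : List α) : (lrs w).length = (Kset w).sup id := by
  rw [lrs_eq, List.length_drop]
  have := Ksup_le w; omega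

lemma lrs_suffix (w : List α) : lrs w <:+ w := List.drop_suffix _ _

lemma lrs_count {w : List α} (hw : w ≠ []) : 2 ≤ countOcc (lrs w) w := by
  obtain ⟨k, hk, he⟩ := Finset.exists_mem_eq_sup (Kset w) ⟨0, zero_mem_Kset hw⟩ id
  have h2 := (Finset.mem_filter.mp hk).2
  rw [lrs_eq, he]; exact h2

lemma lrs_max {w c : List α} (hc : c <:+ w) (h2 : 2 ≤ countOcc c w) :
    c.length ≤ (lrs w).length := by
  rw [lrs_length]
  refine Finset.le_sup (f := id) (Finset.mem_filter.mpr ⟨Finset.mem_range.mpr ?_, ?_⟩)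
  · have := hc.length_le; omega
  · have hd : w.drop (w.length - c.length) = c := (List.suffix_iff_eq_drop.mp hc).symm
    rw [hd]; exact h2

/-! ### bord lemmas -/

def Bset (w : List α) : Finset ℕ :=
  (Finset.range w.length).filter (fun k => w.take k <:+ w)

lemma bord_eq (w : List α) : bord w = w.take ((Bset w).sup id) := rfl

lemma bord_prefix (w : List α) : bord w <+: w := List.take_prefix _ _

lemma bord_nil : bord ([] : List α) = [] := by simp [bord]

lemma zero_mem_Bset {w : List α} (hw : w ≠ []) : 0 ∈ Bset w :=
  Finset.mem_filter.mpr ⟨Finset.mem_range.mpr (List.length_pos_iff.mpr hw), by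
    simp [List.nil_suffix]⟩

lemma Bsup_lt {w : List α} (hw : w ≠ []) : (Bset w).sup id < w.length := by
  have h0 : 0 < w.length := List.length_pos_iff.mpr hw
  refine Finset.sup_lt_iff (by simpa using h0) |>.mpr fun k hk => ?_
  simpa using Finset.mem_range.mp (Finset.mem_filter.mp hk).1

lemma bord_length {w : List α} (hw : w ≠ []) : (bord w).length = (Bset w).sup id := by
  rw [bord_eq, List.length_take]
  have := Bsup_lt hw; omega

lemma bord_length_lt {w : List α} (hw : w ≠ []) : (bord w).length < w.length := by
  rw [bord_length hw]; exact Bsup_lt hw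

lemma bord_suffix (w : List α) : bord w <:+ w := by
  rcases eq_or_ne w [] with rfl | hw
  · simp [bord_nil]
  · obtain ⟨k, hk, he⟩ := Finset.exists_mem_eq_sup (Bset w) ⟨0, zero_mem_Bset hw⟩ id
    rw [bord_eq, he]
    exact (Finset.mem_filter.mp hk).2

lemma bord_ne {w : List α} (hw : w ≠ []) : bord w ≠ w :=
  fun h => absurd (congrArg List.length h) (Nat.ne_of_lt (bord_length_lt hw))

lemma isBorder_bord {w : List α} (h : bord w ≠ []) : IsBorder (bord w) w := by
  have hw : w ≠ [] := fun hw => h (by rw [hw, bord_nil])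
  exact ⟨bord_ne hw, bord_prefix w, bord_suffix w⟩

lemma bord_max {c w : List α} (hc : IsBorder c w) : c.length ≤ (bord w).length := by
  have hw : w ≠ [] := by
    rintro rfl
    exact hc.1 (List.prefix_nil.mp hc.2.1)
  have hlt : c.length < w.length := by
    rcases lt_or_eq_of_le hc.2.1.length_le with h | h
    · exact h
    · exact absurd (hc.2.1.eq_of_length h) hc.1
  rw [bord_length hw]
  refine Finset.le_sup (f := id) (Finset.mem_filter.mpr ⟨Finset.mem_range.mpr hlt, ?_⟩)
  rw [← List.prefix_iff_eq_take.mp hc.2.1]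
  exact hc.2.2

lemma bord_of_length_one {w : List α} (hw : w.length = 1) : bord w = [] := by
  have hsup : (Bset w).sup id = 0 := by
    refine Nat.le_zero.mp (Finset.sup_le fun k hk => ?_)
    have := Finset.mem_range.mp (Finset.mem_filter.mp hk).1
    simp only [id]; omega
  rw [bord_eq, hsup, List.take_zero]

lemma two_le_countOcc_of_border {b w : List α} (hb : b ≠ []) (h : IsBorder b w) :
    2 ≤ countOcc b w := by
  have hlt : b.length < w.length := by
    rcases lt_or_eq_of_le h.2.1.length_le with hh | hh
    · exact hh
    · exact absurd (h.2.1.eq_of_length hh) h.1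
  have h0 : 0 ∈ occs b w := (mem_occs hb).mpr (by simpa using h.2.1)
  have h1 : w.length - b.length ∈ occs b w := suffix_mem_occs hb h.2.2
  have hb0 : 0 < b.length := List.length_pos_iff.mpr hb
  rw [countOcc_eq_card]
  exact Finset.one_lt_card.mpr ⟨0, h0, w.length - b.length, h1, by omega⟩

lemma closed_bord_two {w b : List α} (hb : b ≠ []) (hbw : bord w = b)
    (hc : IsClosedStr w) : countOcc b w = 2 := by
  have hbord : IsBorder b w := hbw ▸ isBorder_bord (hbw.symm ▸ hb)
  rcases hc with h1 | ⟨b', hb', hb'w, hb'2⟩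
  · exact absurd (hbw ▸ bord_of_length_one h1) hb
  · have hlen : b'.length ≤ b.length := hbw ▸ bord_max hb'w
    have hpre : b' <+: b := List.prefix_of_prefix_length_le hb'w.2.1 hbord.2.1 hlen
    have hle : countOcc b w ≤ 2 := hb'2 ▸ countOcc_le_of_prefix hpre w
    have hge := two_le_countOcc_of_border hb hbord
    omega

set_option maxHeartbeats 1000000 in
theorem stmt7 (T : List α) (j : ℕ) (hj1 : 1 ≤ j) (hj2 : j ≤ T.length)
    (hlrs : lrs (T.take j) ≠ []) (b : List α) (hb : b <:+ T.take j)
    (h1 : (lrs (lrs (T.take j))).length < b.length)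
    (h2 : b.length ≤ (lrs (T.take j)).length) :
    (∃! u : List α, u <:+ T.take j ∧ IsClosedStr u ∧ bord u = b) ∧
    (∀ u : List α, u <:+ T.take j → IsClosedStr u → bord u = b →
      countOcc u (T.take j) = 1) := by
  set S := T.take j with hS
  have hSlen : S.length = j := by rw [hS, List.length_take]; omega
  have hSne : S ≠ [] := fun h => by rw [h] at hSlen; simp at hSlen; omega
  set L := lrs S with hL
  have hbne : b ≠ [] := by
    intro h; rw [h] at h1; simp at h1
  have hblen : 0 < b.length := List.length_pos_iff.mpr hbne
  have hLsuf : L <:+ S := lrs_suffix S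
  have hbL : b <:+ L := List.suffix_of_suffix_length_le hb hLsuf h2
  have hcb2 : 2 ≤ countOcc b S :=
    le_trans (lrs_count hSne) (countOcc_le_of_suffix hbne hbL S)
  set e := S.length - b.length with he
  have heP : e ∈ occs b S := suffix_mem_occs hbne hb
  have hblenS : b.length ≤ S.length := hb.length_le
  have hPbound : ∀ i ∈ occs b S, i ≤ e := fun i hi => by
    have := occ_bound hbne hi; omega
  have hNE : ((occs b S).erase e).Nonempty := by
    rw [← Finset.card_pos, Finset.card_erase_of_mem heP]
    rw [countOcc_eq_card] at hcb2; omega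
  set p := ((occs b S).erase e).max' hNE with hp
  have hpmemE : p ∈ (occs b S).erase e := Finset.max'_mem _ hNE
  have hpP : p ∈ occs b S := Finset.mem_of_mem_erase hpmemE
  have hpne : p ≠ e := Finset.ne_of_mem_erase hpmemE
  have hplt : p < e := lt_of_le_of_ne (hPbound p hpP) hpne
  have hpmax : ∀ i ∈ occs b S, i ≠ e → i ≤ p :=
    fun i hi hne => Finset.le_max' _ i (Finset.mem_erase.mpr ⟨hne, hi⟩)
  set u := S.drop p with hu
  have hulen : u.length = S.length - p := by rw [hu, List.length_drop]
  have hblt_u : b.length < u.length := by omega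
  have hune : u ≠ [] := fun h => by rw [h] at hblt_u; simp at hblt_u
  have husuf : u <:+ S := List.drop_suffix _ _
  have htrans : ∀ t, (b <+: u.drop t ↔ b <+: S.drop (p + t)) := fun t => by
    rw [hu, List.drop_drop]
  -- occurrences of b in u
  have hoccu : occs b u = {0, e - p} := by
    ext t
    simp only [Finset.mem_insert, Finset.mem_singleton]
    rw [mem_occs hbne, htrans t]
    constructor
    · intro h
      have hmem : p + t ∈ occs b S := (mem_occs hbne).mpr h
      by_cases hc : p + t = e
      · right; omega
      · left; have := hpmax _ hmem hc; omega
    · rintro (rfl | rfl)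
      · rw [Nat.add_zero]; exact (mem_occs hbne).mp hpP
      · have hpe : p + (e - p) = e := by omega
        rw [hpe]; exact (mem_occs hbne).mp heP
  have hcu2 : countOcc b u = 2 := by
    rw [countOcc_eq_card, hoccu, Finset.card_insert_of_notMem (by simp; omega),
      Finset.card_singleton]
  have hbpu : b <+: u := by
    have := (mem_occs hbne).mp hpP; rw [hu]; exact this
  have hbsu : b <:+ u := List.suffix_of_suffix_length_le hb husuf (le_of_lt hblt_u)
  have hbneu : b ≠ u := fun h => by rw [← h] at hblt_u; omega
  have hborder : IsBorder b u := ⟨hbneu, hbpu, hbsu⟩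
  have hbordu : bord u = b := by
    have hge : b.length ≤ (bord u).length := bord_max hborder
    have hbordne : bord u ≠ [] := by
      intro h
      rw [h] at hge
      simp only [List.length_nil, Nat.le_zero] at hge
      omega
    have hbord_isb : IsBorder (bord u) u := isBorder_bord hbordne
    rcases eq_or_lt_of_le hge with hlen | hlt
    · exact suffix_eq_of_length hbord_isb.2.2 hbsu hlen.symm
    · exfalso
      have hbpc : b <+: bord u :=
        List.prefix_of_prefix_length_le hbpu hbord_isb.2.1 (le_of_lt hlt)
      have hbordlt : (bord u).length < u.length := bord_length_lt hune
      set t := u.length - (bord u).length with ht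
      have hocc : bord u <+: u.drop t := (mem_occs hbordne).mp
        (suffix_mem_occs hbordne hbord_isb.2.2)
      have hmem : t ∈ occs b u := (mem_occs hbne).mpr (hbpc.trans hocc)
      rw [hoccu] at hmem
      simp only [Finset.mem_insert, Finset.mem_singleton] at hmem
      omega
  have hclosed : IsClosedStr u := Or.inr ⟨b, hbne, hborder, hcu2⟩
  -- uniqueness
  have huniq : ∀ u' : List α, u' <:+ S → IsClosedStr u' → bord u' = b → u' = u := by
    intro u' hsu' hcl' hbord'
    have hbord_b : IsBorder b u' := hbord' ▸ isBorder_bord (hbord'.symm ▸ hbne)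
    have hcnt : countOcc b u' = 2 := closed_bord_two hbne hbord' hcl'
    have hblt' : b.length < u'.length := by
      rcases lt_or_eq_of_le hbord_b.2.1.length_le with h | h
      · exact h
      · exact absurd (hbord_b.2.1.eq_of_length h) hbord_b.1
    have hu'le : u'.length ≤ S.length := hsu'.length_le
    set p' := S.length - u'.length with hp'
    have hu'drop : u' = S.drop p' := List.suffix_iff_eq_drop.mp hsu'
    have key : ∀ t, b <+: u'.drop t ↔ b <+: S.drop (p' + t) := fun t => by
      rw [hu'drop, List.drop_drop]
    have hset' : occs b u' = {0, u'.length - b.length} := by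
      have h0 : 0 ∈ occs b u' := (mem_occs hbne).mpr (by simpa using hbord_b.2.1)
      have h1' : u'.length - b.length ∈ occs b u' := suffix_mem_occs hbne hbord_b.2.2
      refine (Finset.eq_of_subset_of_card_le ?_ ?_).symm
      · intro x hx
        simp only [Finset.mem_insert, Finset.mem_singleton] at hx
        rcases hx with rfl | rfl
        · exact h0
        · exact h1'
      · rw [countOcc_eq_card] at hcnt
        rw [hcnt, Finset.card_insert_of_notMem (by simp; omega), Finset.card_singleton]
    have hpp : p' = p := by
      rcases lt_trichotomy p' p with hlt | heq | hgt
      · exfalso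
        have hmem : p - p' ∈ occs b u' := by
          refine (mem_occs hbne).mpr ((key (p - p')).mpr ?_)
          have : p' + (p - p') = p := by omega
          rw [this]; exact (mem_occs hbne).mp hpP
        rw [hset'] at hmem
        simp only [Finset.mem_insert, Finset.mem_singleton] at hmem
        omega
      · exact heq
      · exfalso
        have hp'P : p' ∈ occs b S := by
          refine (mem_occs hbne).mpr ?_
          rw [← hu'drop]; exact hbord_b.2.1
        have hp'ne : p' ≠ e := by omega
        have := hpmax p' hp'P hp'ne; omega
    rw [hu'drop, hpp, ← hu]
  refine ⟨⟨u, ⟨husuf, hclosed, hbordu⟩, fun u' h => huniq u' h.1 h.2.1 h.2.2⟩, ?_⟩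
  intro v hv hcv hbv
  have hveq : v = u := huniq v hv hcv hbv
  rw [hveq]
  have hpu : p ∈ occs u S := (mem_occs hune).mpr (by rw [← hu])
  have hset : occs u S = {p} := by
    ext q
    simp only [Finset.mem_singleton]
    rw [mem_occs hune]
    constructor
    · intro hq
      by_contra hqne
      have hqmem : q ∈ occs u S := (mem_occs hune).mpr hq
      have hqb := occ_bound hune hqmem
      have h2occ : 2 ≤ countOcc u S := by
        rw [countOcc_eq_card]
        exact Finset.one_lt_card.mpr ⟨q, hqmem, p, hpu, hqne⟩
      have hulenle : u.length ≤ L.length := lrs_max husuf h2occ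
      have huL : u <:+ L := List.suffix_of_suffix_length_le husuf hLsuf hulenle
      have hbL2 : 2 ≤ countOcc b L :=
        le_trans (le_of_eq hcu2.symm) (countOcc_suffix_text_le hbne huL)
      have hfin := lrs_max hbL hbL2
      omega
    · rintro rfl
      rw [← hu]
  rw [countOcc_eq_card, hset, Finset.card_singleton]
end
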